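/- Let G be a finite directed graph and u, v vertices such that every path from u to v in the underlying undirected graph of G passes through a vertex of T \subseteq V. Then in p-Bernoulli bond percolation on the bunkbed graph conditioned on all vertices of T being posts, \mathbb{P}(u^- \to v^-) = \mathbb{P}(u^- \to v^+). -/

import Mathlib

/-- Edges of the bunkbed graph of a directed graph on vertex type `V`:
`horiz u v ε` is the copy of the directed edge `(u,v)` in bunk `ε`
(`false` = lower bunk `-`, `true` = upper bunk `+`); `vert w` is the
bidirected vertical edge `(w⁻, w⁺)`. -/
inductive BBEdge (V : Type) : Type
  | horiz : V → V → Bool → BBEdge V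
  | vert  : V → BBEdge V
deriving DecidableEq

/-- The `F`-mirroring map on single edges: vertical edges are fixed, a horizontal
edge whose shadow lies in `F` is sent to its mirrored copy in the other bunk, and
horizontal edges with shadow outside `F` are fixed. -/
def mir {V : Type} [DecidableEq V] (F : Finset (V × V)) : BBEdge V → BBEdge V
  | .horiz u v ε => if (u, v) ∈ F then .horiz u v (!ε) else .horiz u v ε
  | .vert w => .vert w

/-- The `F`-mirrored subgraph `M(H,F)`. -/
def M {V : Type} [DecidableEq V] (H : Finset (BBEdge V)) (F : Finset (V × V)) :
    Finset (BBEdge V) :=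
  H.image (mir F)
/-- The edge set of the bunkbed graph of the directed graph with vertex set `Vs`
and edge set `E`: the vertical edges at all vertices together with the two
horizontal copies of each edge. -/
def bbEdges {V : Type} [DecidableEq V] (Vs : Finset V) (E : Finset (V × V)) :
    Finset (BBEdge V) :=
  Vs.image BBEdge.vert ∪ E.image (fun p => BBEdge.horiz p.1 p.2 false) ∪
    E.image (fun p => BBEdge.horiz p.1 p.2 true)

/-- One step of directed traversal in a subgraph `H` of the bunkbed graph:
horizontal edges are used in their direction within a bunk, and vertical edges
may be traversed in both directions. Vertices of the bunkbed graph are pairs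
`(w, ε)` with `ε : Bool` the bunk label (`false` = `-`, `true` = `+`). -/
def bbStep {V : Type} [DecidableEq V] (H : Finset (BBEdge V)) :
    V × Bool → V × Bool → Prop := fun a b =>
  (a.1 = b.1 ∧ a.2 ≠ b.2 ∧ BBEdge.vert a.1 ∈ H) ∨
    (a.2 = b.2 ∧ BBEdge.horiz a.1 b.1 a.2 ∈ H)

/-- Directed reachability `x → y` in a subgraph of the bunkbed graph. -/
def bbReach {V : Type} [DecidableEq V] (H : Finset (BBEdge V))
    (a b : V × Bool) : Prop :=
  Relation.ReflTransGen (bbStep H) a b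

/-- Probability of the event `A` under `p`-Bernoulli bond percolation on the edge
set `s`: each edge of `s` is retained independently with probability `p`. -/
noncomputable def PrB {V : Type} [DecidableEq V] (p : ℝ) (s : Finset (BBEdge V))
    (A : Finset (BBEdge V) → Prop) : ℝ :=
  letI := Classical.decPred A
  ∑ H ∈ s.powerset.filter A, p ^ H.card * (1 - p) ^ (s.card - H.card)

/-- Conditional probability of `A` given `C` in `p`-Bernoulli percolation on `s`. -/
noncomputable def CondPrB {V : Type} [DecidableEq V] (p : ℝ) (s : Finset (BBEdge V))
    (C A : Finset (BBEdge V) → Prop) : ℝ :=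
  PrB p s (fun H => A H ∧ C H) / PrB p s C

/-- The conditioning event of the conditioned bunkbed model `𝓔_T`: all vertices
of `T` are posts. -/
def postCond {V : Type} [DecidableEq V] (T : Finset V)
    (H : Finset (BBEdge V)) : Prop :=
  ∀ t ∈ T, BBEdge.vert t ∈ H

/-!
Let `S` be the set of vertices reachable from `u` by undirected paths avoiding `T`, and mirror
every horizontal edge both of whose endpoints lie in `(V ∖ S) ∪ T`, i.e. swap its two bunk copies.
This is a measure-preserving involution on configurations that keeps all posts. Composing it with
the relabelling `w^ε ↦ w^{ε xor [w ∉ S]}` of bunkbed vertices sends open paths to open paths: an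
edge whose mirror status disagrees with the relabelling of an endpoint meets `T` there, and the
post at that endpoint lets the path change bunks. Since `u ∈ S` and `v ∉ S`, the event `u⁻ → v⁻`
is mapped onto `u⁻ → v⁺`.
-/

section Mirror

variable {V : Type} [DecidableEq V]

lemma mir_involutive (F : Finset (V × V)) : Function.Involutive (mir F) := by
  rintro (⟨x, y, ε⟩ | w)
  · by_cases h : (x, y) ∈ F <;> simp [mir, h]
  · rfl

lemma mir_horiz (F : Finset (V × V)) (x y : V) (ε : Bool) :
    mir F (.horiz x y ε) = .horiz x y (xor ε (decide ((x, y) ∈ F))) := by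
  by_cases h : (x, y) ∈ F <;> simp [mir, h]

lemma M_M (H : Finset (BBEdge V)) (F : Finset (V × V)) : M (M H F) F = H := by
  simp [M, Finset.image_image, (mir_involutive F).comp_self]

lemma card_M (H : Finset (BBEdge V)) (F : Finset (V × V)) : (M H F).card = H.card :=
  Finset.card_image_of_injective _ (mir_involutive F).injective

lemma vert_mem_M {H : Finset (BBEdge V)} {F : Finset (V × V)} {w : V} :
    .vert w ∈ M H F ↔ .vert w ∈ H := by
  refine ⟨fun h => ?_, fun h => Finset.mem_image_of_mem _ h⟩
  obtain ⟨(⟨x, y, ε⟩ | x), he, hmir⟩ := Finset.mem_image.1 h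
  · simp [mir_horiz] at hmir
  · cases hmir
    exact he

lemma horiz_mem_M {H : Finset (BBEdge V)} {F : Finset (V × V)} {x y : V} {ε : Bool}
    (h : .horiz x y ε ∈ H) : .horiz x y (xor ε (decide ((x, y) ∈ F))) ∈ M H F := by
  rw [← mir_horiz]
  exact Finset.mem_image_of_mem _ h

lemma postCond_M {T : Finset V} {H : Finset (BBEdge V)} {F : Finset (V × V)} :
    postCond T (M H F) ↔ postCond T H := by
  simp only [postCond, vert_mem_M]

lemma horiz_mem_bbEdges {Vs : Finset V} {E : Finset (V × V)} {x y : V} {ε : Bool} :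
    .horiz x y ε ∈ bbEdges Vs E ↔ (x, y) ∈ E := by
  cases ε <;> simp [bbEdges]

lemma M_subset_bbEdges {Vs : Finset V} {E F : Finset (V × V)} {H : Finset (BBEdge V)}
    (hH : H ⊆ bbEdges Vs E) : M H F ⊆ bbEdges Vs E := by
  intro e he
  obtain ⟨(⟨x, y, ε⟩ | w), hH', rfl⟩ := Finset.mem_image.1 he
  · rw [mir_horiz, horiz_mem_bbEdges]
    exact horiz_mem_bbEdges.1 (hH hH')
  · exact hH hH'

end Mirror

section Reach

variable {V : Type} [DecidableEq V]

lemma bbReach_of_vert {H : Finset (BBEdge V)} {x : V} {c d : Bool}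
    (h : c = d ∨ .vert x ∈ H) : bbReach H (x, c) (x, d) := by
  by_cases hcd : c = d
  · exact hcd ▸ .refl
  · exact .single (.inl ⟨rfl, hcd, h.resolve_left hcd⟩)

lemma bbReach_xor_of_postCond {T : Finset V} {H : Finset (BBEdge V)} (hpost : postCond T H)
    {w : V} {b c : Bool} (h : b = c ∨ w ∈ T) (ε : Bool) :
    bbReach H (w, xor ε b) (w, xor ε c) :=
  bbReach_of_vert (h.imp (congrArg _) (hpost w))

variable {Vs T : Finset V} {E F : Finset (V × V)} {f : V → Bool}
  (hF : ∀ x y, (x, y) ∈ E →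
    (f x = decide ((x, y) ∈ F) ∨ x ∈ T) ∧ (f y = decide ((x, y) ∈ F) ∨ y ∈ T))
include hF

lemma bbReach_M_of_bbStep {H : Finset (BBEdge V)} (hH : H ⊆ bbEdges Vs E)
    (hpost : postCond T H) {a b : V × Bool} (hab : bbStep H a b) :
    bbReach (M H F) (a.1, xor a.2 (f a.1)) (b.1, xor b.2 (f b.1)) := by
  obtain ⟨x, ε⟩ := a
  obtain ⟨y, ε'⟩ := b
  have hpostM : postCond T (M H F) := postCond_M.2 hpost
  rcases hab with ⟨rfl, -, hvert⟩ | ⟨rfl, hhoriz⟩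
  · exact bbReach_of_vert (.inr (vert_mem_M.2 hvert))
  · obtain ⟨hx, hy⟩ := hF x y (horiz_mem_bbEdges.1 (hH hhoriz))
    have hedge : bbStep (M H F) (x, xor ε (decide ((x, y) ∈ F)))
        (y, xor ε (decide ((x, y) ∈ F))) := .inr ⟨rfl, horiz_mem_M hhoriz⟩
    exact ((bbReach_xor_of_postCond hpostM hx ε).tail hedge).trans
      (bbReach_xor_of_postCond hpostM (hy.imp_left Eq.symm) ε)

lemma bbReach_M_of_bbReach {H : Finset (BBEdge V)} (hH : H ⊆ bbEdges Vs E)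
    (hpost : postCond T H) {a b : V × Bool} (hab : bbReach H a b) :
    bbReach (M H F) (a.1, xor a.2 (f a.1)) (b.1, xor b.2 (f b.1)) := by
  induction hab with
  | refl => exact .refl
  | tail _ hstep ih => exact ih.trans (bbReach_M_of_bbStep hF hH hpost hstep)

lemma bbReach_iff_bbReach_M {u v : V} (hfu : f u = false) (hfv : f v = true)
    {H : Finset (BBEdge V)} (hH : H ⊆ bbEdges Vs E) (hpost : postCond T H) :
    bbReach H (u, false) (v, false) ↔ bbReach (M H F) (u, false) (v, true) := by
  constructor
  · intro h
    simpa [hfu, hfv] using bbReach_M_of_bbReach hF hH hpost h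
  · intro h
    simpa [hfu, hfv, M_M] using
      bbReach_M_of_bbReach hF (M_subset_bbEdges hH) (postCond_M.2 hpost) h

end Reach

section Symmetry

variable {V : Type} [DecidableEq V]

def flipEdges (E : Finset (V × V)) (T : Finset V) (f : V → Bool) : Finset (V × V) :=
  E.filter fun q => (f q.1 = true ∨ q.1 ∈ T) ∧ (f q.2 = true ∨ q.2 ∈ T)

lemma eq_decide_mem_flipEdges_or_mem {E : Finset (V × V)} {T : Finset V} {f : V → Bool}
    (hsep : ∀ x y, (x, y) ∈ E → x ∉ T → y ∉ T → f x = f y) {x y : V} (hxy : (x, y) ∈ E) :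
    (f x = decide ((x, y) ∈ flipEdges E T f) ∨ x ∈ T) ∧
      (f y = decide ((x, y) ∈ flipEdges E T f) ∨ y ∈ T) := by
  have := hsep x y hxy
  by_cases hx : x ∈ T <;> by_cases hy : y ∈ T <;> cases hfx : f x <;> cases hfy : f y <;>
    simp_all [flipEdges]

theorem PrB_bbReach_and_postCond_eq {Vs T : Finset V} {E : Finset (V × V)} {f : V → Bool}
    (hsep : ∀ x y, (x, y) ∈ E → x ∉ T → y ∉ T → f x = f y) {u v : V}
    (hfu : f u = false) (hfv : f v = true) (p : ℝ) :
    PrB p (bbEdges Vs E) (fun H => bbReach H (u, false) (v, false) ∧ postCond T H) =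
      PrB p (bbEdges Vs E) (fun H => bbReach H (u, false) (v, true) ∧ postCond T H) := by
  have hF x y (hxy : (x, y) ∈ E) := eq_decide_mem_flipEdges_or_mem hsep hxy
  have hreach {H} := bbReach_iff_bbReach_M hF (H := H) (Vs := Vs) hfu hfv
  unfold PrB
  refine Finset.sum_nbij' (M · (flipEdges E T f)) (M · (flipEdges E T f)) ?_ ?_
    (fun H _ => M_M H _) (fun H _ => M_M H _) (fun H _ => by rw [card_M])
  · simp only [Finset.mem_filter, Finset.mem_powerset]
    rintro H ⟨hH, hHreach, hpost⟩
    exact ⟨M_subset_bbEdges hH, (hreach hH hpost).1 hHreach, postCond_M.2 hpost⟩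
  · simp only [Finset.mem_filter, Finset.mem_powerset]
    rintro H ⟨hH, hHreach, hpost⟩
    refine ⟨M_subset_bbEdges hH, ?_, postCond_M.2 hpost⟩
    rw [hreach (M_subset_bbEdges hH) (postCond_M.2 hpost), M_M]
    exact hHreach

end Symmetry

theorem conditioned_cutset_symmetry_general {V : Type} [DecidableEq V]
    (Vs : Finset V) (E : Finset (V × V)) (T : Finset V)
    (u v : V)
    (hcut : ¬ Relation.ReflTransGen
      (fun x y => ((x, y) ∈ E ∨ (y, x) ∈ E) ∧ x ∉ T ∧ y ∉ T) u v)
    (p : ℝ) :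
    CondPrB p (bbEdges Vs E) (postCond T) (fun H => bbReach H (u, false) (v, false)) =
      CondPrB p (bbEdges Vs E) (postCond T) (fun H => bbReach H (u, false) (v, true)) := by
  classical
  set reachable := Relation.ReflTransGen
    (fun x y => ((x, y) ∈ E ∨ (y, x) ∈ E) ∧ x ∉ T ∧ y ∉ T) u
  have hsep : ∀ x y, (x, y) ∈ E → x ∉ T → y ∉ T →
      decide (¬ reachable x) = decide (¬ reachable y) := fun x y hxy hx hy => by
    have : reachable x ↔ reachable y :=
      ⟨fun h => h.tail ⟨.inl hxy, hx, hy⟩, fun h => h.tail ⟨.inr hxy, hy, hx⟩⟩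
    simp only [this]
  unfold CondPrB
  congr 1
  exact PrB_bbReach_and_postCond_eq hsep (by simpa using Relation.ReflTransGen.refl)
    (by simpa using hcut) p

/-- if every path from `u` to `v` in the underlying undirected graph of
a finite directed graph `G` passes through a vertex of `T` (expressed: there is no
undirected walk from `u` to `v` avoiding `T`), then in `p`-Bernoulli bond percolation
on the bunkbed graph conditioned on all vertices of `T` being posts,
`ℙ(u⁻ → v⁻) = ℙ(u⁻ → v⁺)`. -/
theorem conditioned_cutset_symmetry {V : Type} [DecidableEq V]
    (Vs : Finset V) (E : Finset (V × V)) (T : Finset V) (hT : T ⊆ Vs)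
    (u v : V) (hu : u ∈ Vs) (hv : v ∈ Vs)
    (hcut : ¬ Relation.ReflTransGen
      (fun x y => ((x, y) ∈ E ∨ (y, x) ∈ E) ∧ x ∉ T ∧ y ∉ T) u v)
    (p : ℝ) (hp0 : 0 ≤ p) (hp1 : p ≤ 1) :
    CondPrB p (bbEdges Vs E) (postCond T) (fun H => bbReach H (u, false) (v, false)) =
      CondPrB p (bbEdges Vs E) (postCond T) (fun H => bbReach H (u, false) (v, true)) :=
  conditioned_cutset_symmetry_general Vs E T u v hcut p
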